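/- Let k, L, n, α be natural numbers with n ≥ 1 and L ≥ 1, and let ρ_J be a real number with 0 < ρ_J. Let Enc : (Fin k → Bool) → (Fin L → Bool) and Dec : (Fin L → Bool) → (Fin k → Bool) be functions such that for every message r and every word y' with hammingDist(Enc r, y') ≤ ρ_J·L, one has Dec y' = r. Fix a message r and a corrupted n-block word Y' : Fin n → (Fin L → Bool) satisfying Σ_{i} hammingDist(Enc r, Y' i) ≤ (ρ_J/4)·n·L. If I₁, …, I_α are independent random indices, each uniform over Fin n, then the probability that strictly more than α/2 of the decoded samples Dec(Y'(I_j)) equal r is at least 1 − exp(−α/24). -/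

import Mathlib

/-!
A sampled block is decoded wrongly only if its Hamming distance to `Enc r` exceeds `ρJ * L`,
and by Markov's inequality on the total corruption at most `n / 4` blocks are that bad. So each
of the `α` independent samples fails with probability at most `1 / 4`, and Hoeffding's
inequality bounds the probability that at least `α / 2` of them fail by
`exp (-α / 8) ≤ exp (-α / 24)`.
-/

open MeasureTheory ProbabilityTheory Finset ENNReal

section Sampling

variable {Ω ι : Type*} [MeasurableSpace Ω] {μ : Measure Ω} [Fintype ι]

theorem measureReal_sum_ge_le_of_iIndepFun_of_mem_Icc {X : ι → Ω → ℝ} (hindep : iIndepFun X μ)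
    (hmeas : ∀ j, Measurable (X j)) (hX : ∀ j ω, X j ω ∈ Set.Icc (0 : ℝ) 1) {p ε : ℝ}
    (hp : ∀ j, μ[X j] ≤ p) (hε : 0 ≤ ε) :
    μ.real {ω | (p + ε) * Fintype.card ι ≤ ∑ j, X j ω} ≤
      Real.exp (-2 * ε ^ 2 * Fintype.card ι) := by
  have := hindep.isProbabilityMeasure
  have hcentered : iIndepFun (fun j ω => X j ω - μ[X j]) μ :=
    (hindep.comp (fun j (x : ℝ) => x - μ[X j]) fun j => measurable_id.sub_const _ :)
  have hsubG : ∀ j ∈ (univ : Finset ι),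
      HasSubgaussianMGF (fun ω => X j ω - μ[X j]) (1 / 4) μ := by
    intro j _
    have h := hasSubgaussianMGF_of_mem_Icc (μ := μ) (hmeas j).aemeasurable (ae_of_all _ (hX j))
    rwa [show (‖(1 : ℝ) - 0‖₊ / 2) ^ 2 = 1 / 4 by ext; norm_num] at h
  have hsub : {ω | (p + ε) * Fintype.card ι ≤ ∑ j, X j ω} ⊆
      {ω | ε * Fintype.card ι ≤ ∑ j, (X j ω - μ[X j])} := by
    intro ω hω
    have hmean : ∑ j, μ[X j] ≤ p * Fintype.card ι := by
      simpa [mul_comm] using Finset.sum_le_sum fun j (_ : j ∈ univ) => hp j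
    simp only [Set.mem_ofPred_eq, Finset.sum_sub_distrib] at hω ⊢
    linarith
  calc μ.real {ω | (p + ε) * Fintype.card ι ≤ ∑ j, X j ω}
      ≤ μ.real {ω | ε * Fintype.card ι ≤ ∑ j, (X j ω - μ[X j])} := measureReal_mono hsub
    _ ≤ Real.exp (-(ε * Fintype.card ι) ^ 2 / (2 * ↑(∑ _j : ι, (1 / 4 : NNReal)))) :=
        HasSubgaussianMGF.measure_sum_ge_le_of_iIndepFun hcentered hsubG (by positivity)
    _ = Real.exp (-2 * ε ^ 2 * Fintype.card ι) := by
        congr 1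
        rcases eq_or_ne (Fintype.card ι : ℝ) 0 with hN | hN
        · simp [hN]
        · simp only [sum_const, card_univ, nsmul_eq_mul, NNReal.coe_mul, NNReal.coe_natCast]
          push_cast
          field_simp
          ring

theorem measureReal_card_ge_le_of_iIndepFun {β : Type*} [MeasurableSpace β]
    {I : ι → Ω → β} (hindep : iIndepFun I μ) (hmeas : ∀ j, Measurable (I j)) {S : Set β}
    (hS : MeasurableSet S) [DecidablePred (· ∈ S)] {p ε : ℝ}
    (hp : ∀ j, μ.real (I j ⁻¹' S) ≤ p) (hε : 0 ≤ ε) :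
    μ.real {ω | (p + ε) * Fintype.card ι ≤ #{j | I j ω ∈ S}} ≤
      Real.exp (-2 * ε ^ 2 * Fintype.card ι) := by
  have hcount : ∀ ω, (#{j | I j ω ∈ S} : ℝ) = ∑ j, S.indicator 1 (I j ω) := by
    intro ω
    simp [Set.indicator_apply, Finset.sum_boole]
  have hmean : ∀ j, μ[fun ω => S.indicator (1 : β → ℝ) (I j ω)] = μ.real (I j ⁻¹' S) := by
    intro j
    rw [← integral_indicator_one ((hmeas j) hS)]
    rfl
  simp_rw [hcount]
  refine measureReal_sum_ge_le_of_iIndepFun_of_mem_Icc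
    (hindep.comp (fun _ => S.indicator 1) fun _ => measurable_one.indicator hS)
    (fun j => (measurable_one.indicator hS).comp (hmeas j)) (fun j ω => ?_)
    (fun j => (hmean j).trans_le (hp j)) hε
  by_cases h : I j ω ∈ S <;> simp [h]

end Sampling

theorem measure_preimage_finset_eq_card_mul {Ω β : Type*} [MeasurableSpace Ω]
    [MeasurableSpace β] [MeasurableSingletonClass β] {μ : Measure Ω} {Z : Ω → β}
    (hZ : Measurable Z) {c : ℝ≥0∞}
    (hunif : ∀ b, μ {ω | Z ω = b} = c) (s : Finset β) :
    μ (Z ⁻¹' s) = #s * c := by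
  rw [← sum_measure_preimage_singleton s fun b _ => hZ (measurableSet_singleton b)]
  simp [Set.preimage, hunif]

theorem card_filter_le_of_sum_le {ι : Type*} [Fintype ι] {f : ι → ℝ}
    (hf : ∀ i, 0 ≤ f i) {τ c : ℝ} (hτ : 0 < τ) (hsum : ∑ i, f i ≤ c * τ) :
    (#{i | τ ≤ f i} : ℝ) ≤ c := by
  have hmarkov : #{i | τ ≤ f i} • τ ≤ ∑ i ∈ {i | τ ≤ f i}, f i :=
    card_nsmul_le_sum _ _ _ fun i hi => (mem_filter.mp hi).2
  have hsub : ∑ i ∈ {i | τ ≤ f i}, f i ≤ ∑ i, f i :=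
    sum_le_sum_of_subset_of_nonneg (subset_univ _) fun i _ _ => hf i
  rw [nsmul_eq_mul] at hmarkov
  exact le_of_mul_le_mul_right (by linarith) hτ

theorem one_sub_ofReal_le_measure_of_compl_subset {Ω : Type*} [MeasurableSpace Ω]
    {μ : Measure Ω} [IsProbabilityMeasure μ] {s t : Set Ω} (hst : sᶜ ⊆ t) {δ : ℝ}
    (ht : μ.real t ≤ δ) : 1 - ENNReal.ofReal δ ≤ μ s := by
  rw [tsub_le_iff_right]
  calc (1 : ℝ≥0∞) = μ Set.univ := measure_univ.symm
    _ ≤ μ s + μ sᶜ := measure_univ_le_add_compl s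
    _ ≤ μ s + ENNReal.ofReal δ := by
      gcongr
      rw [← ofReal_measureReal]
      exact ENNReal.ofReal_le_ofReal ((measureReal_mono hst).trans ht)

theorem stmt11_general {Ω : Type*} [MeasurableSpace Ω] (μ : Measure Ω) [IsProbabilityMeasure μ]
    (k L n α : ℕ) (hL : 1 ≤ L) (ρJ : ℝ) (hρJ : 0 < ρJ)
    (Enc : (Fin k → Bool) → (Fin L → Bool)) (Dec : (Fin L → Bool) → (Fin k → Bool))
    (hDec : ∀ (r : Fin k → Bool) (y' : Fin L → Bool),
      (hammingDist (Enc r) y' : ℝ) ≤ ρJ * L → Dec y' = r)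
    (r : Fin k → Bool) (Y' : Fin n → (Fin L → Bool))
    (hY' : (∑ i, (hammingDist (Enc r) (Y' i) : ℝ)) ≤ (ρJ / 4) * n * L)
    (I : Fin α → Ω → Fin n) (hmeas : ∀ j, Measurable (I j))
    (hindep : iIndepFun I μ)
    (hunif : ∀ (j : Fin α) (s : Fin n), μ {ω | I j ω = s} = 1 / (n : ℝ≥0∞)) :
    1 - ENNReal.ofReal (Real.exp (-(α : ℝ) / 24)) ≤
      μ {ω | (α : ℝ) / 2 <
        ((Finset.univ.filter fun j => Dec (Y' (I j ω)) = r).card : ℝ)} := by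
  set bad : Finset (Fin n) := {i | Dec (Y' i) ≠ r}
  have hbad : (#bad : ℝ) ≤ n / 4 := by
    refine le_trans ?_ (card_filter_le_of_sum_le (fun i => Nat.cast_nonneg _)
      (by positivity : 0 < ρJ * L) (hY'.trans_eq (by ring)))
    refine Nat.cast_le.mpr (card_le_card fun i hi => ?_)
    simp only [bad, mem_filter, mem_univ, true_and] at hi ⊢
    exact not_lt.mp fun h => hi (hDec r _ h.le)
  have hsample : ∀ j, μ.real (I j ⁻¹' bad) ≤ 1 / 4 := by
    intro j
    rw [measureReal_def, measure_preimage_finset_eq_card_mul (hmeas j) (hunif j),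
      ← div_eq_mul_one_div, ENNReal.toReal_div, toReal_natCast, toReal_natCast]
    exact div_le_of_le_mul₀ (Nat.cast_nonneg _) (by norm_num) (by linarith)
  have htail := measureReal_card_ge_le_of_iIndepFun hindep hmeas
    (Set.toFinite (bad : Set (Fin n))).measurableSet hsample (by norm_num : (0 : ℝ) ≤ 1 / 4)
  refine one_sub_ofReal_le_measure_of_compl_subset (fun ω hω => ?_)
    (htail.trans (Real.exp_le_exp.mpr (by norm_num; linarith [(α.cast_nonneg : (0 : ℝ) ≤ α)])))
  have hsplit : (#{j | Dec (Y' (I j ω)) = r} : ℝ) + #{j | I j ω ∈ (bad : Set (Fin n))} = α := by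
    simpa [bad] using congrArg (Nat.cast (R := ℝ))
      (card_filter_add_card_filter_not (s := univ) fun j => Dec (Y' (I j ω)) = r)
  simp only [Set.mem_compl_iff, Set.mem_ofPred_eq, not_lt] at hω
  simp only [Set.mem_ofPred_eq, Fintype.card_fin]
  linarith

/-- Local decoding of a repeated inner codeword by sampling and majority vote: if the
inner code corrects a `ρ_J` fraction of errors, the total corruption across the `n`
repeated blocks is at most a `ρ_J/4` fraction, and `I₁, …, I_α` are independent
uniform indices, then strictly more than `α/2` of the decoded samples equal the seed
`r` with probability at least `1 − exp(−α/24)`. -/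
theorem stmt11 {Ω : Type*} [MeasurableSpace Ω] (μ : Measure Ω) [IsProbabilityMeasure μ]
    (k L n α : ℕ) (hn : 1 ≤ n) (hL : 1 ≤ L) (ρJ : ℝ) (hρJ : 0 < ρJ)
    (Enc : (Fin k → Bool) → (Fin L → Bool)) (Dec : (Fin L → Bool) → (Fin k → Bool))
    (hDec : ∀ (r : Fin k → Bool) (y' : Fin L → Bool),
      (hammingDist (Enc r) y' : ℝ) ≤ ρJ * L → Dec y' = r)
    (r : Fin k → Bool) (Y' : Fin n → (Fin L → Bool))
    (hY' : (∑ i, (hammingDist (Enc r) (Y' i) : ℝ)) ≤ (ρJ / 4) * n * L)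
    (I : Fin α → Ω → Fin n) (hmeas : ∀ j, Measurable (I j))
    (hindep : iIndepFun I μ)
    (hunif : ∀ (j : Fin α) (s : Fin n), μ {ω | I j ω = s} = 1 / (n : ℝ≥0∞)) :
    1 - ENNReal.ofReal (Real.exp (-(α : ℝ) / 24)) ≤
      μ {ω | (α : ℝ) / 2 <
        ((Finset.univ.filter fun j => Dec (Y' (I j ω)) = r).card : ℝ)} :=
  stmt11_general μ k L n α hL ρJ hρJ Enc Dec hDec r Y' hY' I hmeas hindep hunif
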